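/- arXiv:2112.13435 — 2 statements merged into one kernel-verified Lean document; each statement's English description precedes it below -/
import Mathlib

section
/- Let R be a commutative ring, let N be a finitely generated projective R-module, and let ψ : M → N be an R-linear map such that for every maximal ideal m of R the induced map ψ ⊗ id : M/mM → N/mN is an isomorphism. Then ψ is an isomorphism. -/
/-!
Surjectivity is Nakayama's lemma applied at every maximal ideal to the cokernel of `ψ`, whose
fibres vanish by right exactness of `(R ⧸ m) ⊗ -`. Since `N` is projective, `ψ` then splits, so
its kernel is a finitely generated direct summand of `M`; its fibres inject into those of `M`
and are killed by the injective maps `ψ(m)`, so Nakayama's lemma kills the kernel as well.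
-/

section

open TensorProduct LinearMap

variable {R M N P : Type*} [CommRing R] [AddCommGroup M] [Module R M]
  [AddCommGroup N] [Module R N] [AddCommGroup P] [Module R P]

namespace Module

theorem subsingleton_of_forall_isMaximal_smul_top_eq_top [Module.Finite R P]
    (h : ∀ m : Ideal R, m.IsMaximal → m • (⊤ : Submodule R P) = ⊤) : Subsingleton P := by
  by_contra hP
  obtain ⟨m, hm, hann⟩ := Ideal.exists_le_maximal _ (mt (annihilator_eq_top_iff (R := R)).mp hP)
  obtain ⟨r, hr1, hr0⟩ := Submodule.exists_sub_one_mem_and_smul_eq_zero_of_fg_of_le_smul m ⊤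
    Module.Finite.fg_top (h m hm).ge
  have hr : r ∈ m := hann (mem_annihilator.mpr fun p => hr0 p trivial)
  exact hm.ne_top ((Ideal.eq_top_iff_one m).mpr (by simpa using m.sub_mem hr hr1))

theorem subsingleton_of_forall_isMaximal_subsingleton_tensorProduct [Module.Finite R P]
    (h : ∀ m : Ideal R, m.IsMaximal → Subsingleton ((R ⧸ m) ⊗[R] P)) : Subsingleton P := by
  refine subsingleton_of_forall_isMaximal_smul_top_eq_top (R := R) fun m hm => ?_
  have := h m hm
  rw [← Submodule.Quotient.subsingleton_iff]
  exact (quotTensorEquivQuotSMul P m).symm.injective.subsingleton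

end Module

namespace LinearMap

theorem surjective_of_forall_isMaximal_surjective_baseChange [Module.Finite R N]
    (f : M →ₗ[R] N)
    (h : ∀ m : Ideal R, m.IsMaximal → Function.Surjective (f.baseChange (R ⧸ m))) :
    Function.Surjective f := by
  rw [← range_eq_top, ← Submodule.Quotient.subsingleton_iff]
  refine Module.subsingleton_of_forall_isMaximal_subsingleton_tensorProduct (R := R) fun m hm => ?_
  have hzero : (range f).mkQ.lTensor (R ⧸ m) ∘ₗ f.lTensor (R ⧸ m) = 0 := by
    rw [← lTensor_comp, range_mkQ_comp, lTensor_zero]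
  refine (subsingleton_iff_forall_eq 0).mpr fun y => ?_
  obtain ⟨x, rfl⟩ := lTensor_surjective (R ⧸ m) (Submodule.mkQ_surjective _) y
  obtain ⟨z, rfl⟩ := h m hm x
  exact congr($hzero z)

theorem exists_retraction_ker_subtype_of_surjective [Module.Projective R N]
    {f : M →ₗ[R] N} (hf : Function.Surjective f) :
    ∃ r : M →ₗ[R] ker f, r ∘ₗ (ker f).subtype = id := by
  obtain ⟨s, hs⟩ := Module.projective_lifting_property f id hf
  have hsplit := (exact_subtype_ker_map f).split_tfae (ker f).injective_subtype hf
  exact (hsplit.out 0 1).mp (Exists.intro s hs)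

theorem injective_of_forall_isMaximal_injective_baseChange [Module.Finite R M]
    {f : M →ₗ[R] N} {r : M →ₗ[R] ker f} (hr : r ∘ₗ (ker f).subtype = id)
    (h : ∀ m : Ideal R, m.IsMaximal → Function.Injective (f.baseChange (R ⧸ m))) :
    Function.Injective f := by
  have : Module.Finite R (ker f) := .of_surjective r (surjective_of_comp_eq_id _ _ hr)
  rw [← ker_eq_bot, ← Submodule.subsingleton_iff_eq_bot]
  refine Module.subsingleton_of_forall_isMaximal_subsingleton_tensorProduct (R := R) fun m hm => ?_
  have hinj : Function.Injective ((ker f).subtype.lTensor (R ⧸ m)) :=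
    injective_of_comp_eq_id _ (r.lTensor (R ⧸ m)) (by rw [← lTensor_comp, hr, lTensor_id])
  have hzero : f.lTensor (R ⧸ m) ∘ₗ (ker f).subtype.lTensor (R ⧸ m) = 0 := by
    rw [← lTensor_comp, comp_ker_subtype, lTensor_zero]
  refine (subsingleton_iff_forall_eq 0).mpr fun y => hinj (h m hm ?_)
  rw [map_zero, map_zero]
  exact congr($hzero y)

end LinearMap

end

/-- Nakayama-type lemma: if `N` is a finitely generated projective module over a
commutative ring `R` and `ψ : M → N` is an `R`-linear map such that the induced map
`M ⊗ R/m → N ⊗ R/m` is an isomorphism for every maximal ideal `m` of `R`, then `ψ`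
is an isomorphism. -/
theorem bijective_of_bijective_mod_maximal
    {R M N : Type*} [CommRing R] [AddCommGroup M] [Module R M]
    [AddCommGroup N] [Module R N]
    [Module.Finite R M] [Module.Finite R N] [Module.Projective R N]
    (ψ : M →ₗ[R] N)
    (h : ∀ (m : Ideal R), m.IsMaximal →
      Function.Bijective (LinearMap.baseChange (R ⧸ m) ψ)) :
    Function.Bijective ψ := by
  have hsurj := ψ.surjective_of_forall_isMaximal_surjective_baseChange fun m hm => (h m hm).2
  obtain ⟨r, hr⟩ := LinearMap.exists_retraction_ker_subtype_of_surjective hsurj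
  exact ⟨LinearMap.injective_of_forall_isMaximal_injective_baseChange hr fun m hm => (h m hm).1,
    hsurj⟩
end

section
/- Let A be a ring and J a two-sided ideal of A with J² = J. Then for a left A-module M, the following are equivalent: (1) Hom_A(J, M) = 0; (2) JM = 0; (3) M is (the restriction of) a module over A/J. -/
/-!
Since `J = J²`, every `A`-linear map `f : J → M` is determined by its values on products
`u * v` with `u, v ∈ J`, and `f (u * v) = u • f v`; so if `J` kills `M`, all such maps vanish.
Conversely, for `m : M` the map `j ↦ j • m` is `A`-linear on `J`, so if all maps vanish then `J`
kills `M`. Finally, `J` kills `M` exactly when `a • m` depends only on the class of `a` modulo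
`J`, i.e. when the action descends to `A/J`.
-/

namespace Ideal

variable {A M : Type*} [Semiring A] [AddCommMonoid M] [Module A M] {I : Ideal A}

theorem smul_eq_zero_of_forall_linearMap_eq_zero (h : ∀ f : I →ₗ[A] M, f = 0) :
    ∀ j ∈ I, ∀ m : M, j • m = 0 := fun j hj m =>
  LinearMap.congr_fun (h ((LinearMap.toSpanSingleton A M m).comp I.subtype)) ⟨j, hj⟩

theorem linearMap_eq_zero_of_le_span_mul
    (hI : I ≤ Submodule.span A {z : A | ∃ u ∈ I, ∃ v ∈ I, z = u * v})
    (hM : ∀ j ∈ I, ∀ m : M, j • m = 0) (f : I →ₗ[A] M) : f = 0 := by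
  have hker : I ≤ (LinearMap.ker f).map I.subtype := by
    refine hI.trans (Submodule.span_le.2 ?_)
    rintro _ ⟨u, hu, v, hv, rfl⟩
    refine ⟨u • ⟨v, hv⟩, ?_, rfl⟩
    simp only [SetLike.mem_coe, LinearMap.mem_ker, map_smul]
    exact hM u hu _
  ext x
  obtain ⟨y, hy, hyx⟩ := hker x.2
  rw [← Subtype.ext hyx]
  exact hy

end Ideal

namespace RingCon

variable {A M : Type*} [Semiring A] [AddCommMonoid M] [Module A M] (c : RingCon A)

abbrev quotientModule (hc : ∀ a b, c a b → ∀ m : M, a • m = b • m) : Module c.Quotient M :=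
  letI : SMul c.Quotient M :=
    ⟨fun q m => Quotient.liftOn' q (· • m) fun a b hab => hc a b hab m⟩
  c.mk'_surjective.moduleLeft c.mk' fun _ _ => rfl

end RingCon

namespace TwoSidedIdeal

variable {A M : Type*} [Ring A] [AddCommGroup M] [Module A M] (J : TwoSidedIdeal A)

theorem smul_eq_zero_of_mk'_smul [Module J.ringCon.Quotient M]
    (h : ∀ (a : A) (m : M), RingCon.mk' J.ringCon a • m = a • m) :
    ∀ j ∈ J, ∀ m : M, j • m = 0 := by
  intro j hj m
  have hj0 : RingCon.mk' J.ringCon j = 0 :=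
    Quotient.sound' ((J.rel_iff j 0).2 (by simpa using hj))
  rw [← h, hj0, zero_smul]

theorem smul_eq_smul_of_rel (hM : ∀ j ∈ J, ∀ m : M, j • m = 0) {a b : A} (hab : J.ringCon a b)
    (m : M) : a • m = b • m :=
  sub_eq_zero.1 (by rw [← sub_smul]; exact hM _ ((J.rel_iff a b).1 hab) m)

end TwoSidedIdeal

/-- Let `A` be a ring and `J` a two-sided ideal with `J² = J` (expressed by saying that
`J` is spanned, as a left ideal, by products of two of its elements).  Then for a left
`A`-module `M` the following are equivalent:
(1) every `A`-linear map `J → M` is zero;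
(2) `J • M = 0`;
(3) the `A`-action on `M` is the restriction of an `A/J`-module structure. -/
theorem hom_vanish_iff_smul_vanish_iff_quotient_module
    {A M : Type*} [Ring A] [AddCommGroup M] [Module A M]
    (J : TwoSidedIdeal A)
    (hJ2 : Submodule.span A {z : A | ∃ u ∈ J, ∃ v ∈ J, z = u * v} = TwoSidedIdeal.asIdeal J) :
    List.TFAE
      [ ∀ f : (TwoSidedIdeal.asIdeal J : Ideal A) →ₗ[A] M, f = 0,
        ∀ j ∈ J, ∀ m : M, j • m = 0,
        ∃ inst : Module J.ringCon.Quotient M, ∀ (a : A) (m : M),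
          @SMul.smul _ _ inst.toDistribMulAction.toMulAction.toSMul
            (RingCon.mk' J.ringCon a) m = a • m ] := by
  tfae_have 1 → 2 := Ideal.smul_eq_zero_of_forall_linearMap_eq_zero
  tfae_have 2 → 1 := Ideal.linearMap_eq_zero_of_le_span_mul hJ2.ge
  tfae_have 2 → 3 := fun hM =>
    ⟨J.ringCon.quotientModule fun _ _ hab => J.smul_eq_smul_of_rel hM hab, fun _ _ => rfl⟩
  tfae_have 3 → 2 := fun ⟨_, h⟩ => J.smul_eq_zero_of_mk'_smul h
  tfae_finish
end
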